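/- Let a : A be a term of Λ over the single atomic type p whose variables (both free and bound) are x₁ : A₁, …, xₙ : Aₙ, let f be an assignment in the P-model, and for each j ∈ {1, …, n} let b_j be a closed term that i-defines f(x_j). Let ā be the type-instance of a obtained by substituting N_i for p. Then the term ā[x̄₁ := b₁, …, x̄ₙ := bₙ], obtained by substituting each b_j for the corresponding variable x̄_j of ā, i-defines V_{a,f}. -/

import Mathlib

set_option autoImplicit false

/-- Simple types over a set `ν` of atomic types. -/
inductive Ty (ν : Type) : Type
  | atom : ν → Ty ν
  | arrow : Ty ν → Ty ν → Ty ν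

/-- A typing context: the (types of the) free variables. -/
abbrev Ctx (ν : Type) : Type := List (Ty ν)

/-- Typed de Bruijn variables. -/
inductive Var {ν : Type} : Ctx ν → Ty ν → Type
  | vz {Γ : Ctx ν} {A : Ty ν} : Var (A :: Γ) A
  | vs {Γ : Ctx ν} {A B : Ty ν} : Var Γ A → Var (B :: Γ) A

/-- Typed terms of the simply typed lambda calculus Λ. -/
inductive Tm {ν : Type} : Ctx ν → Ty ν → Type
  | var {Γ : Ctx ν} {A : Ty ν} : Var Γ A → Tm Γ A
  | app {Γ : Ctx ν} {A B : Ty ν} : Tm Γ (Ty.arrow A B) → Tm Γ A → Tm Γ B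
  | lam {Γ : Ctx ν} {A B : Ty ν} : Tm (A :: Γ) B → Tm Γ (Ty.arrow A B)

/-- Renamings between contexts. -/
def Ren {ν : Type} (Γ Δ : Ctx ν) : Type := ∀ A : Ty ν, Var Γ A → Var Δ A

def Ren.ext {ν : Type} {Γ Δ : Ctx ν} (ρ : Ren Γ Δ) (A : Ty ν) : Ren (A :: Γ) (A :: Δ) :=
  fun _ v => match v with
  | .vz => .vz
  | .vs w => .vs (ρ _ w)

def Tm.rename {ν : Type} : ∀ {Γ Δ : Ctx ν} {A : Ty ν}, Ren Γ Δ → Tm Γ A → Tm Δ A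
  | _, _, _, ρ, .var v => .var (ρ _ v)
  | _, _, _, ρ, .app f a => .app (f.rename ρ) (a.rename ρ)
  | _, _, _, ρ, .lam b => .lam (b.rename (ρ.ext _))

/-- Simultaneous substitutions. -/
def Subst {ν : Type} (Γ Δ : Ctx ν) : Type := ∀ A : Ty ν, Var Γ A → Tm Δ A

def Subst.ext {ν : Type} {Γ Δ : Ctx ν} (σ : Subst Γ Δ) (A : Ty ν) :
    ∀ B : Ty ν, Var (A :: Γ) B → Tm (A :: Δ) B
  | _, .vz => .var .vz
  | _, .vs w => (σ _ w).rename (fun _ => Var.vs)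

def Tm.subst {ν : Type} : ∀ {Γ Δ : Ctx ν} {A : Ty ν}, Subst Γ Δ → Tm Γ A → Tm Δ A
  | _, _, _, σ, .var v => σ _ v
  | _, _, _, σ, .app f a => .app (f.subst σ) (a.subst σ)
  | _, _, _, σ, .lam b => .lam (b.subst (Subst.ext σ _))

/-- Extending a substitution with a term for the last variable. -/
def Subst.cons {ν : Type} {Γ Δ : Ctx ν} {A : Ty ν} (b : Tm Δ A) (σ : Subst Γ Δ) :
    ∀ B : Ty ν, Var (A :: Γ) B → Tm Δ B
  | _, .vz => b
  | _, .vs w => σ _ w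

/-- Substitution of a single term for the last variable: `a[b/x]`. -/
def Tm.subst1 {ν : Type} {Γ : Ctx ν} {A B : Ty ν} (a : Tm (A :: Γ) B) (b : Tm Γ A) : Tm Γ B :=
  a.subst (Subst.cons b (fun _ v => .var v))

/-- The theory Λ of βη-equality. -/
inductive Eqv {ν : Type} : ∀ {Γ : Ctx ν} {A : Ty ν}, Tm Γ A → Tm Γ A → Prop
  | refl {Γ : Ctx ν} {A : Ty ν} (a : Tm Γ A) : Eqv a a
  | symm {Γ : Ctx ν} {A : Ty ν} {a b : Tm Γ A} : Eqv a b → Eqv b a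
  | trans {Γ : Ctx ν} {A : Ty ν} {a b c : Tm Γ A} : Eqv a b → Eqv b c → Eqv a c
  | congApp {Γ : Ctx ν} {A B : Ty ν} {f g : Tm Γ (Ty.arrow A B)} {a b : Tm Γ A} :
      Eqv f g → Eqv a b → Eqv (.app f a) (.app g b)
  | congLam {Γ : Ctx ν} {A B : Ty ν} {a b : Tm (A :: Γ) B} :
      Eqv a b → Eqv (.lam a) (.lam b)
  | beta {Γ : Ctx ν} {A B : Ty ν} (a : Tm (A :: Γ) B) (b : Tm Γ A) :
      Eqv (.app (.lam a) b) (a.subst1 b)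
  | eta {Γ : Ctx ν} {A B : Ty ν} (a : Tm Γ (Ty.arrow A B)) :
      Eqv (.lam (.app (a.rename (fun _ => Var.vs)) (.var .vz))) a

/-- Substitution of types for the atomic types, on types. -/
def Ty.substA {ν : Type} (σ : ν → Ty ν) : Ty ν → Ty ν
  | .atom v => σ v
  | .arrow A B => .arrow (A.substA σ) (B.substA σ)

def Var.substA {ν : Type} (σ : ν → Ty ν) :
    ∀ {Γ : Ctx ν} {A : Ty ν}, Var Γ A → Var (Γ.map (Ty.substA σ)) (A.substA σ)
  | _, _, .vz => .vz
  | _, _, .vs v => .vs (v.substA σ)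

/-- Substitution of types for the atomic types, on terms: type-instances. -/
def Tm.substA {ν : Type} (σ : ν → Ty ν) :
    ∀ {Γ : Ctx ν} {A : Ty ν}, Tm Γ A → Tm (Γ.map (Ty.substA σ)) (A.substA σ)
  | _, _, .var v => .var (v.substA σ)
  | _, _, .app f a => .app (f.substA σ) (a.substA σ)
  | _, _, .lam b => .lam (b.substA σ)

/-- `Ty.arrs [A₁, …, Aₘ] B = Aₘ → (… → (A₁ → B))` : the type of `λx₁…xₘ.a`. -/
def Ty.arrs {ν : Type} : Ctx ν → Ty ν → Ty ν
  | [], B => B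
  | A :: Γ, B => Ty.arrs Γ (Ty.arrow A B)

/-- λ-abstracting all the free variables of a term. -/
def Tm.lamAll {ν : Type} : ∀ {Γ : Ctx ν} {A : Ty ν}, Tm Γ A → Tm [] (Ty.arrs Γ A)
  | [], _, a => a
  | _ :: Γ, _, a => Tm.lamAll (Γ := Γ) (Tm.lam a)

/-- `Ty.arrsR [B₁, …, Bₙ] C = B₁ → (… → (Bₙ → C))`. -/
def Ty.arrsR {ν : Type} : List (Ty ν) → Ty ν → Ty ν
  | [], C => C
  | B :: Bs, C => Ty.arrow B (Ty.arrsR Bs C)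

/-- A list of terms `h₁ : B₁, …, hₙ : Bₙ` in context `Δ`. -/
inductive HList {ν : Type} (Δ : Ctx ν) : List (Ty ν) → Type
  | nil : HList Δ []
  | cons {B : Ty ν} {Bs : List (Ty ν)} : Tm Δ B → HList Δ Bs → HList Δ (B :: Bs)

/-- Iterated application `t h₁ … hₙ`. -/
def HList.apps {ν : Type} {Δ : Ctx ν} :
    ∀ {Bs : List (Ty ν)} {C : Ty ν}, HList Δ Bs → Tm Δ (Ty.arrsR Bs C) → Tm Δ C
  | _, _, .nil, t => t
  | _, _, .cons h hs, t => HList.apps hs (t.app h)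

/-- Iterated application `t h₁ … hₙ`. -/
def Tm.apps {ν : Type} {Δ : Ctx ν} {Bs : List (Ty ν)} {C : Ty ν}
    (t : Tm Δ (Ty.arrsR Bs C)) (hs : HList Δ Bs) : Tm Δ C :=
  hs.apps t

/-- Weakening of a closed term into an arbitrary context. -/
def Var.elim0 {ν : Type} {A : Ty ν} {C : Sort*} : Var ([] : Ctx ν) A → C :=
  fun v => nomatch v

def Tm.wk {ν : Type} {Δ : Ctx ν} {A : Ty ν} (t : Tm ([] : Ctx ν) A) : Tm Δ A :=
  t.rename (fun _ v => v.elim0)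

/-! Λ built over the single atomic type `p`, represented by `Unit`. -/

/-- `AT 0 = p`, `AT (n+1) = AT n → AT n`. -/
def AT : ℕ → Ty Unit
  | 0 => .atom ()
  | n + 1 => .arrow (AT n) (AT n)

/-- `NT i = (AT i → AT i) → (AT i → AT i)`, the type `N_i` of Church numerals. -/
def NT (i : ℕ) : Ty Unit := .arrow (AT (i + 1)) (AT (i + 1))

/-- `iter f x n = f (f (… (f x)))` (`n` times). -/
def Tm.iter {Γ : Ctx Unit} {A : Ty Unit} (f : Tm Γ (Ty.arrow A A)) (x : Tm Γ A) : ℕ → Tm Γ A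
  | 0 => x
  | n + 1 => f.app (Tm.iter f x n)

/-- The Church numeral `[n]_i : N_i`, i.e. `λ x y. xⁿ(y)`. -/
def church (i n : ℕ) : Tm [] (NT i) :=
  .lam (.lam (Tm.iter (.var (.vs .vz)) (.var .vz) n))

/-- The full type structure over the finite ordinal `P = {0, …, h−1}`:
`P`-types and their `P`-functionals.  `interp h A` is `A^p_P`. -/
def interp (h : ℕ) : Ty Unit → Type
  | .atom _ => Fin h
  | .arrow A B => interp h A → interp h B

/-- The type substitution replacing the atomic type `p` by `N_i`; `A.substA (subN i)`
is the type `Aⁱ`. -/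
def subN (i : ℕ) : Unit → Ty Unit := fun _ => NT i

/-- `iDefines h i A φ t`: the closed term `t : Aⁱ` `i`-defines the `P`-functional
`φ ∈ A` (where `P = {0, …, h−1}`). -/
def iDefines (h i : ℕ) : ∀ A : Ty Unit, interp h A → Tm [] (A.substA (subN i)) → Prop
  | .atom _, n, t => Eqv t (church i n.val)
  | .arrow B C, φ, t => ∀ (ψ : interp h B) (b : Tm [] (B.substA (subN i))),
      iDefines h i B ψ b → iDefines h i C (φ ψ) (t.app b)

/-- An assignment in the `P`-model: a function assigning to each variable `x : A`
a `P`-functional in `A^p_P`. -/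
def Assign (h : ℕ) (Γ : Ctx Unit) : Type := ∀ A : Ty Unit, Var Γ A → interp h A

/-- Extending an assignment: `f[x := α]`. -/
def Assign.cons {h : ℕ} {Γ : Ctx Unit} {A : Ty Unit} (α : interp h A) (f : Assign h Γ) :
    ∀ B : Ty Unit, Var (A :: Γ) B → interp h B
  | _, .vz => α
  | _, .vs v => f _ v

/-- The value `V_{a,f}` of a term in the `P`-model `⟨F, V⟩`, satisfying
`V_{x,f} = f(x)`, `V_{ab,f} = V_{a,f}(V_{b,f})` and `V_{λx.a,f}(α) = V_{a,f[x:=α]}`. -/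
def pval (h : ℕ) : ∀ {Γ : Ctx Unit} {A : Ty Unit}, Tm Γ A → Assign h Γ → interp h A
  | _, _, .var v, f => f _ v
  | _, _, .app a b, f => pval h a f (pval h b f)
  | _, _, .lam a, f => fun α => pval h a (Assign.cons α f)

section SubstLemmas
variable {ν : Type}

theorem ext_ren_ren {Γ Δ Θ : Ctx ν} (ρ : Ren Γ Δ) (ρ' : Ren Δ Θ) (A : Ty ν) :
    (Ren.ext (fun B v => ρ' B (ρ B v)) A) = fun B v => (ρ'.ext A) B ((ρ.ext A) B v) := by
  funext B v; cases v <;> rfl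

theorem rename_rename : ∀ {Γ Δ Θ : Ctx ν} {A : Ty ν} (t : Tm Γ A) (ρ : Ren Γ Δ) (ρ' : Ren Δ Θ),
    (t.rename ρ).rename ρ' = t.rename (fun B v => ρ' B (ρ B v))
  | _, _, _, _, .var v, ρ, ρ' => rfl
  | _, _, _, _, .app f a, ρ, ρ' => by
      simp [Tm.rename, rename_rename f, rename_rename a]
  | _, _, _, _, .lam b, ρ, ρ' => by
      simp [Tm.rename, rename_rename b, ext_ren_ren]

theorem ext_sub_ren {Γ Δ Θ : Ctx ν} (ρ : Ren Γ Δ) (σ : Subst Δ Θ) (A : Ty ν) :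
    (Subst.ext (fun B v => σ B (ρ B v)) A) = fun B v => (Subst.ext σ A) B ((ρ.ext A) B v) := by
  funext B v; cases v <;> rfl

theorem subst_rename : ∀ {Γ Δ Θ : Ctx ν} {A : Ty ν} (t : Tm Γ A) (ρ : Ren Γ Δ) (σ : Subst Δ Θ),
    (t.rename ρ).subst σ = t.subst (fun B v => σ B (ρ B v))
  | _, _, _, _, .var v, ρ, σ => rfl
  | _, _, _, _, .app f a, ρ, σ => by
      simp [Tm.rename, Tm.subst, subst_rename f, subst_rename a]
  | _, _, _, _, .lam b, ρ, σ => by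
      simp [Tm.rename, Tm.subst, subst_rename b, ext_sub_ren]; exact subst_rename b _ _

theorem ext_ren_sub {Γ Δ Θ : Ctx ν} (σ : Subst Γ Δ) (ρ : Ren Δ Θ) (A : Ty ν) :
    (Subst.ext (fun B v => (σ B v).rename ρ) A)
      = fun B v => ((Subst.ext σ A) B v).rename (ρ.ext A) := by
  funext B v; cases v with
  | vz => rfl
  | vs w =>
    show ((σ _ w).rename ρ).rename _ = ((σ _ w).rename _).rename _
    exact (rename_rename _ _ _).trans (rename_rename (σ _ w) (fun _ => Var.vs) (ρ.ext A)).symm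

theorem rename_subst : ∀ {Γ Δ Θ : Ctx ν} {A : Ty ν} (t : Tm Γ A) (σ : Subst Γ Δ) (ρ : Ren Δ Θ),
    (t.subst σ).rename ρ = t.subst (fun B v => (σ B v).rename ρ)
  | _, _, _, _, .var v, σ, ρ => rfl
  | _, _, _, _, .app f a, σ, ρ => by
      simp [Tm.rename, Tm.subst, rename_subst f, rename_subst a]
  | _, _, _, _, .lam b, σ, ρ => by
      simp [Tm.rename, Tm.subst, rename_subst b, ext_ren_sub]; exact rename_subst b _ _

theorem ext_sub_sub {Γ Δ Θ : Ctx ν} (σ : Subst Γ Δ) (τ : Subst Δ Θ) (A : Ty ν) :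
    (Subst.ext (fun B v => (σ B v).subst τ) A)
      = fun B v => ((Subst.ext σ A) B v).subst (Subst.ext τ A) := by
  funext B v; cases v with
  | vz => rfl
  | vs w =>
    show ((σ _ w).subst τ).rename _ = ((σ _ w).rename _).subst _
    exact (rename_subst _ _ _).trans (subst_rename (σ _ w) (fun _ => Var.vs) (Subst.ext τ A)).symm

theorem subst_subst : ∀ {Γ Δ Θ : Ctx ν} {A : Ty ν} (t : Tm Γ A) (σ : Subst Γ Δ) (τ : Subst Δ Θ),
    (t.subst σ).subst τ = t.subst (fun B v => (σ B v).subst τ)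
  | _, _, _, _, .var v, σ, τ => rfl
  | _, _, _, _, .app f a, σ, τ => by
      simp [Tm.subst, subst_subst f, subst_subst a]
  | _, _, _, _, .lam b, σ, τ => by
      simp [Tm.subst, subst_subst b, ext_sub_sub]; exact subst_subst b _ _

theorem subst_id : ∀ {Γ : Ctx ν} {A : Ty ν} (t : Tm Γ A), t.subst (fun _ v => .var v) = t
  | _, _, .var v => rfl
  | _, _, .app f a => by simp [Tm.subst, subst_id f, subst_id a]
  | Γ, _, .lam (A := A) b => by
      have : (Subst.ext (Γ := Γ) (fun _ v => Tm.var v) A) = fun _ v => .var v := by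
        funext B v; cases v <;> rfl
      simp [Tm.subst, this, subst_id b]

theorem subst1_ext {Γ : Ctx ν} {A B : Ty ν} (t : Tm (A :: Γ) B) (σ : Subst Γ [])
    (b' : Tm [] A) :
    (t.subst (Subst.ext σ A)).subst1 b' = t.subst (Subst.cons b' σ) := by
  unfold Tm.subst1
  refine (subst_subst _ _ _).trans ?_
  congr 1
  funext C v
  cases v with
  | vz => rfl
  | vs w =>
    show ((σ _ w).rename _).subst _ = σ _ w
    refine (subst_rename _ _ _).trans ?_
    exact subst_id _

end SubstLemmas

theorem iDefines_eqv (h i : ℕ) :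
    ∀ (A : Ty Unit) (φ : interp h A) {t t' : Tm [] (A.substA (subN i))},
      Eqv t t' → iDefines h i A φ t → iDefines h i A φ t'
  | .atom _, n, t, t', e, H => (e.symm).trans H
  | .arrow B C, φ, t, t', e, H => fun ψ b hb =>
      iDefines_eqv h i C (φ ψ) (Eqv.congApp e (Eqv.refl b)) (H ψ b hb)

/--
**Lemma 5.1.** Let `a : A` be a term of Λ (over the single atomic type `p`) whose
variables are those of the context `Γ`, let `f` be an assignment in the `P`-model
(`P = {0, …, h−1}`, `h ≥ 2`), and let `b` assign to each variable of `Γ` (transported to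
the context of `ā`) a closed term `i`-defining its `f`-value.  Then the term
`ā[x̄₁ := b₁, …, x̄ₙ := bₙ]`, where `ā` is the type-instance of `a` obtained by
substituting `N_i` for `p`, `i`-defines `V_{a,f}`.
-/

theorem substituted_instance_defines (h : ℕ) (hh : 2 ≤ h) (i : ℕ)
    {Γ : Ctx Unit} {A : Ty Unit} (a : Tm Γ A) (f : Assign h Γ)
    (b : Subst (Γ.map (Ty.substA (subN i))) [])
    (hb : ∀ (B : Ty Unit) (v : Var Γ B),
      iDefines h i B (f B v) (b (B.substA (subN i)) (v.substA (subN i)))) :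
    iDefines h i A (pval h a f) ((a.substA (subN i)).subst b) := by
  induction a with
  | var v => exact hb _ v
  | app s t ihs iht => exact ihs f b hb _ _ (iht f b hb)
  | lam t ih =>
    intro ψ b' hb'
    apply iDefines_eqv h i _ _ (Eqv.beta _ b').symm
    rw [subst1_ext]
    apply ih (Assign.cons ψ f) (Subst.cons b' b)
    intro B v
    cases v with
    | vz => exact hb'
    | vs w => exact hb B w
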